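/- (Committee monotonicity of Majority Judgment) There exists an increasing chain of committees W_1 ⊂ W_2 ⊂ … ⊂ W_{|A|} with |W_l| = l for each l, such that each W_l maximizes the Majority Judgment total score Σ_{i∈K} f_judge(μ^i, W) among all size-l subsets of A. Equivalently, ties in the Majority Judgment rule can always be broken so as to preserve committee monotonicity. -/

import Mathlib

open Finset

/-- Majority Judgment committee scoring function: `Σ_{a ∈ W} μ(a)`. -/
noncomputable def fJudge {A : Type*} (μ : A → ℝ) (W : Finset A) : ℝ :=
  ∑ a ∈ W, μ a

/-!
Since `f_judge` is additive in the committee, the total score of `W` is `∑_{a ∈ W} s a` with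
`s a = ∑_i μ^i(a)`. Adding the candidates one at a time in order of decreasing `s` gives a
nested chain, and an exchange argument shows that each of its members maximizes `∑_{a ∈ W} s a`
among committees of its size.
-/

theorem sum_le_sum_insert_of_forall_le {α M : Type*} [DecidableEq α] [AddCommMonoid M]
    [LinearOrder M] [IsOrderedAddMonoid M] {s : α → M} {W : Finset α} {a : α} (haW : a ∉ W)
    (ha : ∀ b ∉ W, s b ≤ s a)
    (hmax : ∀ W' : Finset α, W'.card = W.card → ∑ x ∈ W', s x ≤ ∑ x ∈ W, s x)
    (W' : Finset α) (hW' : W'.card = W.card + 1) :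
    ∑ x ∈ W', s x ≤ ∑ x ∈ insert a W, s x := by
  obtain ⟨b, hbW', hbW⟩ : ∃ b ∈ W', b ∉ W :=
    not_subset.mp fun h => by have := card_le_card h; omega
  have hrest : ∑ x ∈ W'.erase b, s x ≤ ∑ x ∈ W, s x :=
    hmax _ (by rw [card_erase_of_mem hbW', hW']; rfl)
  calc ∑ x ∈ W', s x = s b + ∑ x ∈ W'.erase b, s x := (add_sum_erase _ _ hbW').symm
    _ ≤ s a + ∑ x ∈ W, s x := add_le_add (ha b hbW) hrest
    _ = ∑ x ∈ insert a W, s x := (sum_insert haW).symm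

section Greedy

variable {α M : Type*} [Fintype α] [DecidableEq α] [LinearOrder M] (s : α → M)

noncomputable def greedyInsert (W : Finset α) : Finset α :=
  if h : Wᶜ.Nonempty then insert (Wᶜ.exists_max_image s h).choose W else W

theorem exists_greedyInsert_eq {W : Finset α} (hW : W.card < Fintype.card α) :
    ∃ a ∉ W, (∀ b ∉ W, s b ≤ s a) ∧ greedyInsert s W = insert a W := by
  have hne : Wᶜ.Nonempty := by rw [← card_pos, card_compl]; omega
  obtain ⟨ha, hmax⟩ := (Wᶜ.exists_max_image s hne).choose_spec
  exact ⟨_, mem_compl.mp ha, fun b hb => hmax b (mem_compl.mpr hb),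
    by rw [greedyInsert, dif_pos hne]⟩

noncomputable def greedyChain (l : ℕ) : Finset α :=
  (greedyInsert s)^[l] ∅

theorem greedyChain_succ (l : ℕ) : greedyChain s (l + 1) = greedyInsert s (greedyChain s l) :=
  Function.iterate_succ_apply' _ _ _

theorem card_greedyChain {l : ℕ} (hl : l ≤ Fintype.card α) : (greedyChain s l).card = l := by
  induction l with
  | zero => rfl
  | succ n ih =>
    obtain ⟨a, haW, -, heq⟩ := exists_greedyInsert_eq s (W := greedyChain s n) (by omega)
    rw [greedyChain_succ, heq, card_insert_of_notMem haW, ih (by omega)]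

theorem greedyChain_ssubset_succ {l : ℕ} (hl : l < Fintype.card α) :
    greedyChain s l ⊂ greedyChain s (l + 1) := by
  obtain ⟨a, haW, -, heq⟩ :=
    exists_greedyInsert_eq s (W := greedyChain s l) (by rw [card_greedyChain s hl.le]; exact hl)
  rw [greedyChain_succ, heq]
  exact ssubset_insert haW

theorem sum_le_sum_greedyChain [AddCommMonoid M] [IsOrderedAddMonoid M] {l : ℕ}
    (hl : l ≤ Fintype.card α) (W' : Finset α) (hW' : W'.card = l) : ∑ x ∈ W', s x ≤ ∑ x ∈ greedyChain s l, s x := by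
  induction l generalizing W' with
  | zero => simp [card_eq_zero.mp hW', greedyChain]
  | succ n ih =>
    have hcard := card_greedyChain s (l := n) (by omega)
    obtain ⟨a, haW, ha, heq⟩ := exists_greedyInsert_eq s (W := greedyChain s n) (by omega)
    rw [greedyChain_succ, heq]
    exact sum_le_sum_insert_of_forall_le haW ha
      (fun W'' h => ih (by omega) W'' (h.trans hcard)) W' (by rw [hW', hcard])

end Greedy

theorem sum_fJudge_eq {K A : Type*} [Fintype K] (μ : K → A → ℝ) (W : Finset A) :
    ∑ i : K, fJudge (μ i) W = ∑ a ∈ W, ∑ i : K, μ i a :=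
  Finset.sum_comm

theorem judge_committee_monotone_general
    {K A : Type*} [Fintype K] [Fintype A]
    (μ : K → A → ℝ) :
    ∃ W : ℕ → Finset A,
      (∀ l, 1 ≤ l → l ≤ Fintype.card A →
        (W l).card = l ∧
        ∀ W' : Finset A, W'.card = l →
          ∑ i : K, fJudge (μ i) W' ≤ ∑ i : K, fJudge (μ i) (W l)) ∧
      (∀ l, 1 ≤ l → l < Fintype.card A → W l ⊂ W (l + 1)) := by
  classical
  let s : A → ℝ := fun a => ∑ i : K, μ i a
  refine ⟨greedyChain s, fun l _ hl => ⟨card_greedyChain s hl, fun W' hW' => ?_⟩,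
    fun l _ hl => greedyChain_ssubset_succ s hl⟩
  rw [sum_fJudge_eq, sum_fJudge_eq]
  exact sum_le_sum_greedyChain s hl W' hW'

/-- Committee monotonicity of Majority Judgment: there is an increasing chain of
committees `W_1 ⊂ W_2 ⊂ … ⊂ W_{|A|}` with `|W_l| = l`, each of which maximizes the
Majority Judgment total score among size-`l` subsets of `A`. -/
theorem judge_committee_monotone
    {K A : Type*} [Fintype K] [Nonempty K] [Fintype A] [Nonempty A]
    (μ : K → A → ℝ) :
    ∃ W : ℕ → Finset A,
      (∀ l, 1 ≤ l → l ≤ Fintype.card A →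
        (W l).card = l ∧
        ∀ W' : Finset A, W'.card = l →
          ∑ i : K, fJudge (μ i) W' ≤ ∑ i : K, fJudge (μ i) (W l)) ∧
      (∀ l, 1 ≤ l → l < Fintype.card A → W l ⊂ W (l + 1)) :=
  judge_committee_monotone_general μ
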